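/- Let G be a finite simple graph with positive integer vertex weights w, let k be a positive integer, and let G' be the unweighted graph obtained from G by attaching to every vertex v a new pendant path on w(v) − 1 new vertices (one endpoint of the path is made adjacent to v). If there exists S ⊆ V(G) such that |S| + max_{D ∈ cc(G−S)} w(D) ≤ k and additionally |S| + w(v) − 1 ≤ k for every v ∈ S, then vi(G') ≤ k. -/

import Mathlib

open SimpleGraph

variable {V : Type*}

/-- The vertex sets of the connected components of `G − S`
(the subgraph of `G` induced on the complement of `S`). -/
def ccSets {W : Type*} (G : SimpleGraph W) (S : Set W) : Set (Set W) :=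
  {D | ∃ c : (G.induce Sᶜ).ConnectedComponent, D = Subtype.val '' c.supp}

/-- The total weight of a set of vertices. -/
noncomputable def wsum {W : Type*} (w : W → ℕ) (A : Set W) : ℕ := ∑ᶠ v ∈ A, w v

/-- The vertex integrity of an unweighted graph `H`:
`vi(H) = min_{S ⊆ V(H)} ( |S| + max_{D ∈ cc(H−S)} |D| )`,
the maximum over an empty collection being `0`. -/
noncomputable def vi {W : Type*} (H : SimpleGraph W) : ℕ :=
  sInf {k | ∃ S : Set W, k = S.ncard + sSup (Set.ncard '' ccSets H S)}

/-- The graph `G'` obtained from `G` by attaching to every vertex `v` a pendant path on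
`w(v) − 1` new vertices; the new vertex `(v, 0)` is adjacent to `v`, and `(v, i)` is
adjacent to `(v, i+1)`. -/
def pendGraph (G : SimpleGraph V) (w : V → ℕ) :
    SimpleGraph (V ⊕ (Σ v : V, Fin (w v - 1))) :=
  SimpleGraph.fromRel (fun a b => match a, b with
    | Sum.inl a, Sum.inl b => G.Adj a b
    | Sum.inl a, Sum.inr q => a = q.1 ∧ (q.2 : ℕ) = 0
    | Sum.inr q, Sum.inr r => q.1 = r.1 ∧ (r.2 : ℕ) = (q.2 : ℕ) + 1
    | _, _ => False)

/-!
Delete from `G'` the copies of the vertices of `S`. What remains of the pendant path of a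
vertex `v ∈ S` is a component of its own, with `w(v) − 1` vertices. Every other component
projects (path vertices onto their attachment vertex) into a single component `D` of `G − S`,
and since each vertex `u` of `G` together with its path has exactly `w(u)` vertices, it has
at most `w(D)` vertices.
-/

theorem wsum_mono {W : Type*} {w : W → ℕ} {A B : Set W} (h : A ⊆ B) (hB : B.Finite) :
    wsum w A ≤ wsum w B :=
  (finsum_mem_add_sdiff h hB).le.trans' (Nat.le_add_right _ _)

namespace pendGraph

variable {G : SimpleGraph V} {w : V → ℕ}

def base (w : V → ℕ) : V ⊕ (Σ v : V, Fin (w v - 1)) → V := Sum.elim id Sigma.fst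

theorem base_preimage_singleton (a : V) :
    base w ⁻¹' {a} =
      insert (Sum.inl a) (Set.range fun j : Fin (w a - 1) => Sum.inr ⟨a, j⟩) := by
  ext (b | ⟨b, j⟩)
  · simp [base, eq_comm]
  · simp only [base, Set.mem_preimage, Sum.elim_inr, Set.mem_singleton_iff, Set.mem_insert_iff,
      reduceCtorEq, Set.mem_range, false_or]
    constructor
    · rintro rfl
      exact ⟨j, rfl⟩
    · rintro ⟨j, hj⟩
      cases hj
      rfl

theorem ncard_range_inr (a : V) :
    (Set.range fun j : Fin (w a - 1) => (Sum.inr ⟨a, j⟩ : V ⊕ (Σ v : V, Fin (w v - 1)))).ncard =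
      w a - 1 := by
  rw [Set.ncard_range_of_injective (fun i j h => by simpa using h), Nat.card_eq_fintype_card,
    Fintype.card_fin]

theorem ncard_base_preimage_singleton {a : V} (ha : 0 < w a) :
    (base w ⁻¹' {a}).ncard = w a := by
  rw [base_preimage_singleton, Set.ncard_insert_of_notMem (by simp), ncard_range_inr]
  omega

theorem eq_inl_or_base_eq_of_adj_inr {q : Σ v : V, Fin (w v - 1)} {y}
    (h : (pendGraph G w).Adj (Sum.inr q) y) : y = Sum.inl q.1 ∨ base w y = q.1 := by
  obtain ⟨a, i⟩ := q
  rcases y with b | ⟨b, j⟩ <;> simp [pendGraph, base] at h ⊢ <;> grind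

theorem base_eq_or_adj_of_adj {x y} (h : (pendGraph G w).Adj x y) :
    base w x = base w y ∨ G.Adj (base w x) (base w y) := by
  rcases x with a | ⟨a, i⟩ <;> rcases y with b | ⟨b, j⟩ <;> simp [pendGraph, base] at h ⊢ <;>
    grind [G.adj_symm]

theorem ncard_le_of_subset_base_preimage {a : V} {A : Set (V ⊕ (Σ v : V, Fin (w v - 1)))}
    (hA : A ⊆ base w ⁻¹' {a}) (ha : Sum.inl a ∉ A) : A.ncard ≤ w a - 1 := by
  rw [base_preimage_singleton, Set.subset_insert_iff_of_notMem ha] at hA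
  exact (Set.ncard_le_ncard hA).trans_eq (ncard_range_inr a)

theorem ncard_le_wsum_base [Finite V] (hw : ∀ v, 0 < w v)
    (A : Set (V ⊕ (Σ v : V, Fin (w v - 1)))) : A.ncard ≤ wsum w (base w '' A) :=
  calc A.ncard ≤ (⋃ b ∈ base w '' A, base w ⁻¹' {b}).ncard :=
        Set.ncard_le_ncard fun x hx => Set.mem_biUnion (Set.mem_image_of_mem _ hx) rfl
    _ ≤ ∑ᶠ b ∈ base w '' A, (base w ⁻¹' {b}).ncard := (Set.toFinite _).ncard_biUnion_le _
    _ = wsum w (base w '' A) :=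
        finsum_mem_congr rfl fun b _ => ncard_base_preimage_singleton (hw b)

section Removal

variable {S : Set V} {x y : ↥(Sum.inl '' S : Set (V ⊕ (Σ v : V, Fin (w v - 1))))ᶜ}

theorem base_eq_of_adj_of_base_mem (h : ((pendGraph G w).induce (Sum.inl '' S)ᶜ).Adj x y)
    (hx : base w x ∈ S) : base w y = base w x := by
  obtain ⟨a | q, hxS⟩ := x
  · exact absurd ⟨a, hx, rfl⟩ hxS
  · rcases eq_inl_or_base_eq_of_adj_inr h with hy | hy
    · exact absurd ⟨q.1, hx, hy.symm⟩ y.2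
    · exact hy

theorem base_notMem_of_adj (h : ((pendGraph G w).induce (Sum.inl '' S)ᶜ).Adj x y)
    (hx : base w x ∉ S) : base w y ∉ S :=
  fun hy => hx (base_eq_of_adj_of_base_mem h.symm hy ▸ hy)

theorem base_eq_of_reachable (h : ((pendGraph G w).induce (Sum.inl '' S)ᶜ).Reachable x y)
    (hx : base w x ∈ S) : base w y = base w x := by
  rw [reachable_iff_reflTransGen] at h
  induction h with
  | refl => rfl
  | tail _ hyz ih => rw [base_eq_of_adj_of_base_mem hyz (ih ▸ hx), ih]

theorem reachable_base_of_reachable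
    (h : ((pendGraph G w).induce (Sum.inl '' S)ᶜ).Reachable x y) (hx : base w x ∉ S) :
    ∃ hy : base w y ∉ S, (G.induce Sᶜ).Reachable ⟨base w x, hx⟩ ⟨base w y, hy⟩ := by
  rw [reachable_iff_reflTransGen] at h
  induction h with
  | refl => exact ⟨hx, .rfl⟩
  | @tail y z _ hyz ih =>
    obtain ⟨hy, hxy⟩ := ih
    have hz := base_notMem_of_adj hyz hy
    refine ⟨hz, hxy.trans ?_⟩
    rcases base_eq_or_adj_of_adj (show (pendGraph G w).Adj y z from hyz) with e | hadj
    · exact (Subtype.ext e : (⟨_, hy⟩ : ↥Sᶜ) = ⟨_, hz⟩) ▸ .rfl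
    · exact Adj.reachable hadj

theorem ncard_le_of_mem_ccSets [Finite V] (hw : ∀ v, 0 < w v) {D}
    (hD : D ∈ ccSets (pendGraph G w) (Sum.inl '' S)) :
    (∃ a ∈ S, D.ncard ≤ w a - 1) ∨ D.ncard ≤ sSup (wsum w '' ccSets G S) := by
  obtain ⟨c, rfl⟩ := hD
  induction c using ConnectedComponent.ind with | h x
  have hreach (y) (hy : y ∈ (((pendGraph G w).induce _).connectedComponentMk x).supp) :
      ((pendGraph G w).induce (Sum.inl '' S)ᶜ).Reachable x y :=
    (ConnectedComponent.eq.1 hy).symm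
  by_cases hx : base w x ∈ S
  · refine .inl ⟨base w x, hx, ncard_le_of_subset_base_preimage ?_ ?_⟩
    · rintro _ ⟨y, hy, rfl⟩
      exact base_eq_of_reachable (hreach y hy) hx
    · rintro ⟨y, -, hy⟩
      exact y.2 ⟨_, hx, hy.symm⟩
  · refine .inr ?_
    calc _ ≤ wsum w (base w '' _) := ncard_le_wsum_base hw _
      _ ≤ wsum w (Subtype.val '' ((G.induce Sᶜ).connectedComponentMk ⟨_, hx⟩).supp) := by
          refine wsum_mono ?_ (Set.toFinite _)
          rintro _ ⟨_, ⟨y, hy, rfl⟩, rfl⟩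
          obtain ⟨hy', hxy⟩ := reachable_base_of_reachable (hreach y hy) hx
          exact ⟨⟨_, hy'⟩, ConnectedComponent.eq.2 hxy.symm, rfl⟩
      _ ≤ sSup (wsum w '' ccSets G S) :=
          le_csSup (Set.toFinite _).bddAbove ⟨_, ⟨_, rfl⟩, rfl⟩

end Removal

end pendGraph

open pendGraph in
theorem vi_pendGraph_of_swvi_general [Fintype V] (G : SimpleGraph V) (w : V → ℕ)
    (hw : ∀ v, 0 < w v) (k : ℕ)
    (h : ∃ S : Set V, S.ncard + sSup (wsum w '' ccSets G S) ≤ k ∧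
      ∀ v ∈ S, S.ncard + w v - 1 ≤ k) :
    vi (pendGraph G w) ≤ k := by
  obtain ⟨S, hS, hSw⟩ := h
  have hcomp : sSup (Set.ncard '' ccSets (pendGraph G w) (Sum.inl '' S)) ≤ k - S.ncard := by
    refine csSup_le' ?_
    rintro _ ⟨D, hD, rfl⟩
    rcases ncard_le_of_mem_ccSets hw hD with ⟨a, ha, hDa⟩ | hD
    · have := hSw a ha
      omega
    · omega
  calc vi (pendGraph G w)
      ≤ (Sum.inl '' S).ncard + sSup (Set.ncard '' ccSets (pendGraph G w) (Sum.inl '' S)) :=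
        Nat.sInf_le ⟨_, rfl⟩
    _ ≤ k := by
        rw [Set.ncard_image_of_injective S Sum.inl_injective]
        omega

/-- If `G` has a set `S` with `|S| + max_{D ∈ cc(G−S)} w(D) ≤ k` and moreover
`|S| + w(v) − 1 ≤ k` for every `v ∈ S`, then the graph `G'` obtained by attaching to every
vertex `v` a pendant path on `w(v) − 1` vertices satisfies `vi(G') ≤ k`. -/
theorem vi_pendGraph_of_swvi [Fintype V] (G : SimpleGraph V) (w : V → ℕ)
    (hw : ∀ v, 0 < w v) (k : ℕ) (hk : 0 < k)
    (h : ∃ S : Set V, S.ncard + sSup (wsum w '' ccSets G S) ≤ k ∧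
      ∀ v ∈ S, S.ncard + w v - 1 ≤ k) :
    vi (pendGraph G w) ≤ k :=
  vi_pendGraph_of_swvi_general G w hw k h
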